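/- Minimizing the zero-reward TBRM objective does not force π_θ = π_ref: there exist a finite action set A, reference logits Q_ref, and logits Q_θ with Q_θ ≠ Q_ref up to state-independent constants (so π_θ ≠ π_ref), such that for a one-step trajectory the TBRM residual V_θ(s_1) + log π_θ(a|s_1) − log π_ref(a|s_1) equals zero for the sampled action a; i.e., zero TBRM loss on a dataset does not imply π_θ = π_ref. -/
import Mathlib


/-- Zero TBRM residual does not imply `π_θ = π_ref`: there exist a finite action set
(of size `n ≥ 2`), logits `Q_θ`, reference logits `Q_ref`, and a sampled action `a`
such that the zero-reward TBRM residual `V_θ + log π_θ(a) − log π_ref(a)` vanishes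
while the softmax policies differ. (Single-state setting; `V_Q = log Σ_a exp Q(a)` and
`log π(a) = Q(a) − V_Q`.) -/
theorem tbrm_zero_residual_not_calibrated :
    ∃ (n : ℕ), 2 ≤ n ∧ ∃ (Qθ Qref : Fin n → ℝ) (a : Fin n),
      (Real.log (∑ b : Fin n, Real.exp (Qθ b))
        + (Qθ a - Real.log (∑ b : Fin n, Real.exp (Qθ b)))
        - (Qref a - Real.log (∑ b : Fin n, Real.exp (Qref b))) = 0) ∧
      (fun b => Real.exp (Qθ b - Real.log (∑ b' : Fin n, Real.exp (Qθ b')))) ≠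
      (fun b => Real.exp (Qref b - Real.log (∑ b' : Fin n, Real.exp (Qref b')))) := by
  refine ⟨2, le_refl 2, ![-Real.log 2, 0], ![0, 0], 0, ?_, ?_⟩
  · have h2 : (0:ℝ) < 2 := by norm_num
    simp [Fin.sum_univ_two, Real.log_exp, Real.exp_log h2]
    ring_nf
  · intro h
    have h0 := congrFun h 0
    simp only [Fin.sum_univ_two] at h0
    have e1 : Real.exp (![-Real.log 2, (0:ℝ)] 0) = 1/2 := by
      simp [Real.exp_neg, Real.exp_log (by norm_num : (0:ℝ) < 2)]
    have e2 : Real.exp (![-Real.log 2, (0:ℝ)] 1) = 1 := by simp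
    have e3 : Real.exp (![(0:ℝ), 0] 0) = 1 := by simp
    have e4 : Real.exp (![(0:ℝ), 0] 1) = 1 := by simp
    rw [Real.exp_sub, Real.exp_sub] at h0
    rw [e1, e2, e3, e4] at h0
    rw [Real.exp_log (by norm_num : (0:ℝ) < 1/2 + 1),
        Real.exp_log (by norm_num : (0:ℝ) < 1 + 1)] at h0
    norm_num at h0
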